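/- Let p be a prime, let B be a finite abelian p-group with r = rk(B), and let k ≥ 1 be a natural number. Then Aut_{(k)}(B) is a normal p-subgroup of Aut(B); consequently it is contained in every Sylow p-subgroup of Aut(B), and for any Sylow p-subgroup P of Aut(B) one has [P : Aut_{(k)}(B)] ≤ p^(k·r^2). -/

import Mathlib

/-- The subgroup of `p ^ k`-th powers of a (multiplicatively written) commutative group. -/
def pkPowers (p k : ℕ) (B : Type*) [CommGroup B] : Subgroup B :=
  (powMonoidHom (p ^ k) : B →* B).range

/-- `Aut_{(k)}(B)`: the subgroup of `Aut(B)` consisting of those automorphisms `φ` such that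
`φ g * g⁻¹` is a `p ^ k`-th power for every `g ∈ B`. -/
def autk (p k : ℕ) (B : Type*) [CommGroup B] : Subgroup (MulAut B) where
  carrier := {φ : MulAut B | ∀ g : B, φ g * g⁻¹ ∈ pkPowers p k B}
  one_mem' := by
    intro g
    simpa using (pkPowers p k B).one_mem
  mul_mem' := by
    intro a b ha hb g
    have h : (a * b) g * g⁻¹ = a (b g) * (b g)⁻¹ * (b g * g⁻¹) := by
      rw [MulAut.mul_apply]; group
    rw [h]
    exact mul_mem (ha (b g)) (hb g)
  inv_mem' := by
    intro a ha g
    have h := ha (a⁻¹ g)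
    rw [MulAut.apply_inv_self] at h
    simpa [mul_inv_rev] using inv_mem h

/-!
Write `B^{p^j}` for `pkPowers p j B`. An automorphism `φ ∈ Aut_{(k)}(B)` moves elements of
`B^{p^j}` only by elements of `B^{p^{j+k}}`. With `d = φ g · g⁻¹ ∈ B^{p^k}`, telescoping gives
`φ^p g · g⁻¹ = ∏_{i<p} φ^i d = d^p · ∏_{i<p} φ^i d · d⁻¹ ∈ B^{p^{k+1}} · B^{p^{2k}}`, so for `k ≥ 1`
we get `φ^p ∈ Aut_{(k+1)}(B)`, and `φ^{p^n} ∈ Aut_{(k+n)}(B) = 1` once `p^n` kills `B`. Being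
normal (as `B^{p^k}` is characteristic), the `p`-group `Aut_{(k)}(B)` lies in every Sylow
`p`-subgroup. Finally `Aut_{(k)}(B)` is the kernel of the action of `Aut(B)` on `B / B^{p^k}`,
a group of exponent dividing `p^k` and rank at most `r`, hence of order at most `p^{kr}`; its
automorphisms are determined by the images of `r` generators, so there are at most `p^{kr·r}`.
-/

section PkPowers

variable {p : ℕ} {B C : Type*} [CommGroup B] [CommGroup C]

lemma pkPowers_anti {i j : ℕ} (h : i ≤ j) : pkPowers p j B ≤ pkPowers p i B := by
  rintro _ ⟨b, rfl⟩
  refine ⟨b ^ p ^ (j - i), ?_⟩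
  simp only [powMonoidHom_apply, ← pow_mul, ← pow_add, Nat.sub_add_cancel h]

lemma pow_mem_pkPowers_succ {k : ℕ} {x : B} (hx : x ∈ pkPowers p k B) :
    x ^ p ∈ pkPowers p (k + 1) B := by
  obtain ⟨b, rfl⟩ := hx
  exact ⟨b, by simp only [powMonoidHom_apply, ← pow_mul, pow_succ]⟩

lemma map_mem_pkPowers (f : B →* C) {k : ℕ} {x : B} (hx : x ∈ pkPowers p k B) :
    f x ∈ pkPowers p k C := by
  obtain ⟨b, rfl⟩ := hx
  exact ⟨f b, (map_pow f b _).symm⟩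

instance pkPowers_characteristic (k : ℕ) : (pkPowers p k B).Characteristic :=
  Subgroup.characteristic_iff_le_comap.mpr fun φ _ hx => map_mem_pkPowers φ.toMonoidHom hx

lemma pkPowers_eq_bot {n k : ℕ} (hB : ∀ g : B, g ^ p ^ n = 1) (h : n ≤ k) :
    pkPowers p k B = ⊥ := by
  refine (Subgroup.eq_bot_iff_forall _).mpr ?_
  rintro _ ⟨b, rfl⟩
  rw [powMonoidHom_apply, ← Nat.sub_add_cancel h, pow_add, pow_mul, hB]

lemma pow_eq_one_of_quotient_pkPowers (k : ℕ) (q : B ⧸ pkPowers p k B) : q ^ p ^ k = 1 := by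
  induction q using QuotientGroup.induction_on with
  | H x => exact (QuotientGroup.eq_one_iff _).mpr ⟨x, rfl⟩

end PkPowers

section Autk

variable {p k : ℕ} {B : Type*} [CommGroup B]

lemma mul_inv_mem_pkPowers_add {φ : MulAut B} (hφ : φ ∈ autk p k B) {j : ℕ} {x : B}
    (hx : x ∈ pkPowers p j B) : φ x * x⁻¹ ∈ pkPowers p (j + k) B := by
  obtain ⟨b, rfl⟩ := hx
  obtain ⟨c, hc⟩ := hφ b
  refine ⟨c, ?_⟩
  simp only [powMonoidHom_apply] at hc ⊢
  rw [map_pow, ← inv_pow, ← mul_pow, ← hc, ← pow_mul, ← pow_add, add_comm]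

lemma pow_apply_mul_inv (φ : MulAut B) (g : B) (n : ℕ) :
    (φ ^ n) g * g⁻¹ = ∏ i ∈ Finset.range n, (φ ^ i) (φ g * g⁻¹) := by
  induction n with
  | zero => simp
  | succ n ih =>
    rw [Finset.prod_range_succ, ← ih, pow_succ, MulAut.mul_apply, map_mul, map_inv,
      mul_comm ((φ ^ n) g), mul_assoc, mul_inv_cancel_comm_assoc, mul_comm]

lemma pow_mem_autk_succ (hk : 1 ≤ k) {φ : MulAut B} (hφ : φ ∈ autk p k B) :
    φ ^ p ∈ autk p (k + 1) B := by
  intro g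
  set d := φ g * g⁻¹
  have hd : d ∈ pkPowers p k B := hφ g
  have hsplit : (φ ^ p) g * g⁻¹ = d ^ p * ∏ i ∈ Finset.range p, (φ ^ i) d * d⁻¹ :=
    calc (φ ^ p) g * g⁻¹ = ∏ i ∈ Finset.range p, d * ((φ ^ i) d * d⁻¹) := by
          rw [pow_apply_mul_inv]
          exact Finset.prod_congr rfl fun i _ => (mul_inv_cancel_comm_assoc _ _).symm
      _ = d ^ p * ∏ i ∈ Finset.range p, (φ ^ i) d * d⁻¹ := by
          rw [Finset.prod_mul_distrib, Finset.prod_const, Finset.card_range]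
  rw [hsplit]
  refine mul_mem (pow_mem_pkPowers_succ hd) (Subgroup.prod_mem _ fun i _ => ?_)
  exact pkPowers_anti (by omega) (mul_inv_mem_pkPowers_add (pow_mem hφ i) hd)

lemma pow_pow_mem_autk_add (hk : 1 ≤ k) {φ : MulAut B} (hφ : φ ∈ autk p k B) (m : ℕ) :
    φ ^ p ^ m ∈ autk p (k + m) B := by
  induction m with
  | zero => simpa using hφ
  | succ m ih =>
    rw [pow_succ, pow_mul, ← add_assoc]
    exact pow_mem_autk_succ (by omega) ih

lemma autk_eq_bot_of_pkPowers_eq_bot (h : pkPowers p k B = ⊥) : autk p k B = ⊥ := by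
  refine (Subgroup.eq_bot_iff_forall _).mpr fun φ hφ => MulEquiv.ext fun g => ?_
  have hg := hφ g
  rwa [h, Subgroup.mem_bot, mul_inv_eq_one] at hg

instance autk_normal : (autk p k B).Normal where
  conj_mem φ hφ σ g := by
    have h : (σ * φ * σ⁻¹) g * g⁻¹ = σ (φ (σ⁻¹ g) * (σ⁻¹ g)⁻¹) := by
      rw [map_mul, map_inv, MulAut.mul_apply, MulAut.mul_apply, MulAut.apply_inv_self]
    rw [h]
    exact map_mem_pkPowers σ.toMonoidHom (hφ _)

lemma isPGroup_autk (hp : p.Prime) [Finite B] (hB : IsPGroup p B) (hk : 1 ≤ k) :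
    IsPGroup p (autk p k B) := by
  have : Fact p.Prime := ⟨hp⟩
  obtain ⟨n, hn⟩ := IsPGroup.iff_card.mp hB
  have hexp : ∀ g : B, g ^ p ^ n = 1 := fun g => hn ▸ pow_card_eq_one'
  intro φ
  refine ⟨n, Subtype.ext ?_⟩
  have h := pow_pow_mem_autk_add hk φ.2 n
  rwa [autk_eq_bot_of_pkPowers_eq_bot (pkPowers_eq_bot hexp (by omega)), Subgroup.mem_bot] at h

end Autk

lemma card_mulAut_le_card_pow_rank (G : Type*) [Group G] [Finite G] :
    Nat.card (MulAut G) ≤ Nat.card G ^ Group.rank G := by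
  obtain ⟨S, hS, hSc⟩ := Group.rank_spec G
  have hinj : Function.Injective fun (σ : MulAut G) (s : S) => σ s := by
    intro σ τ h
    have : (σ : G →* G) = τ := MonoidHom.eq_of_eqOn_dense hSc fun s hs => congrFun h ⟨s, hs⟩
    exact MulEquiv.ext fun g => DFunLike.congr_fun this g
  calc Nat.card (MulAut G) ≤ Nat.card (S → G) := Nat.card_le_card_of_injective _ hinj
    _ = Nat.card G ^ Group.rank G := by rw [Nat.card_fun, Nat.card_eq_finsetCard, hS]

section QuotientAction

variable {G : Type*} [Group G]

def mulAutQuotient (N : Subgroup G) [hN : N.Characteristic] : MulAut G →* MulAut (G ⧸ N) where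
  toFun σ := QuotientGroup.congr N N σ (Subgroup.characteristic_iff_map_eq.mp hN σ)
  map_one' := by
    ext q
    induction q using QuotientGroup.induction_on
    rfl
  map_mul' σ τ := by
    ext q
    induction q using QuotientGroup.induction_on
    rfl

@[simp]
lemma mulAutQuotient_apply_mk (N : Subgroup G) [N.Characteristic] (σ : MulAut G) (g : G) :
    mulAutQuotient N σ g = σ g :=
  rfl

end QuotientAction

section Index

variable {p k : ℕ} {B : Type*} [CommGroup B]

lemma ker_mulAutQuotient_pkPowers : (mulAutQuotient (pkPowers p k B)).ker = autk p k B := by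
  ext φ
  simp only [MonoidHom.mem_ker, MulEquiv.ext_iff, QuotientGroup.forall_mk, mulAutQuotient_apply_mk,
    MulAut.one_apply, QuotientGroup.eq_iff_div_mem, div_eq_mul_inv]
  rfl

lemma relIndex_autk_le (hp : 0 < p) [Finite B] (H : Subgroup (MulAut B)) :
    (autk p k B).relIndex H ≤ p ^ (k * Group.rank B ^ 2) := by
  set Q := B ⧸ pkPowers p k B
  set s := Group.rank Q
  have hcard : Nat.card Q ≤ (p ^ k) ^ s :=
    Nat.le_of_dvd (by positivity)
      (card_dvd_exponent_pow_rank' Q (pow_eq_one_of_quotient_pkPowers k))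
  have hs : s ≤ Group.rank B :=
    Group.rank_le_of_surjective (QuotientGroup.mk' _) (QuotientGroup.mk'_surjective _)
  calc (autk p k B).relIndex H = Nat.card (H.map (mulAutQuotient (pkPowers p k B))) := by
        rw [← ker_mulAutQuotient_pkPowers, Subgroup.relIndex_ker]
    _ ≤ Nat.card (MulAut Q) := Subgroup.card_le_card_group _
    _ ≤ Nat.card Q ^ s := card_mulAut_le_card_pow_rank Q
    _ ≤ ((p ^ k) ^ s) ^ s := Nat.pow_le_pow_left hcard s
    _ = p ^ (k * (s * s)) := by rw [← pow_mul, ← pow_mul]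
    _ ≤ p ^ (k * Group.rank B ^ 2) := Nat.pow_le_pow_right hp (by rw [sq]; gcongr)

end Index

/-- **Lemma.** Let `B` be a finite abelian `p`-group with `r = rk(B)` and let `k ≥ 1`.
Then `Aut_{(k)}(B)` is a normal `p`-subgroup of `Aut(B)`; consequently it is contained in
every Sylow `p`-subgroup of `Aut(B)`, and for any Sylow `p`-subgroup `P` of `Aut(B)` the
index of `Aut_{(k)}(B)` in `P` is at most `p ^ (k r²)`. -/
theorem stmt_9 (p : ℕ) (hp : p.Prime) (B : Type*) [CommGroup B] [Finite B]
    (hB : IsPGroup p B) (r : ℕ) (hr : r = Group.rank B) (k : ℕ) (hk : 1 ≤ k) :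
    (autk p k B).Normal ∧ IsPGroup p (autk p k B) ∧
      ∀ P : Sylow p (MulAut B), autk p k B ≤ (P : Subgroup (MulAut B)) ∧
        (autk p k B).relIndex (P : Subgroup (MulAut B)) ≤ p ^ (k * r ^ 2) := by
  have hpGroup : IsPGroup p (autk p k B) := isPGroup_autk hp hB hk
  subst hr
  refine ⟨autk_normal, hpGroup, fun P => ⟨hpGroup.le_sylow_of_normal P, ?_⟩⟩
  exact relIndex_autk_le hp.pos (P : Subgroup (MulAut B))
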